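/- arXiv:2103.00283 — 2 statements merged into one kernel-verified Lean document; each statement's English description precedes it below -/
import Mathlib

section
/- For every set F, the class of linearly ordered sets equipped with an F-indexed family of order automorphisms has the strong amalgamation property: whenever A, B, C are linearly ordered sets, each equipped with an F-indexed family of order automorphisms (order preserving bijections), and i_A : C → A, i_B : C → B are order embeddings commuting with each indexed automorphism, there exist a linearly ordered set D with an F-indexed family of order automorphisms and order embeddings j_A : A → D, j_B : B → D commuting with each indexed automorphism, such that j_A ∘ i_A = j_B ∘ i_B and range(j_A) ∩ range(j_B) = range(j_A ∘ i_A). -/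
/-! Amalgamate on `α ⊕ β`: `α` keeps its order, and `b : β` lies above `a : α` exactly when
`iB c < b` for every `c` with `iA c ≤ a`, so inside each gap of `γ` the points of `α` come first.
Sending `iB c` to `inl (iA c)` rather than to `inr (iB c)` identifies nothing beyond the common
copy of `γ`, which makes the amalgam strong. The order is defined from `iA`, `iB` and the three
orders alone, so compatible automorphisms act on the amalgam by `Sum.map`. -/

/-- A linearly ordered set equipped with an `F`-indexed family of order
automorphisms. -/
structure LinOrderAuts (F : Type) where
  carrier : Type
  [linOrd : LinearOrder carrier]
  f : F → carrier ≃o carrier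

attribute [instance] LinOrderAuts.linOrd

open Function Set Sum

variable {α β γ : Type*} [LinearOrder α] [LinearOrder β] [LinearOrder γ]

def Amalgam (_iA : γ ↪o α) (_iB : γ ↪o β) : Type _ := α ⊕ β

namespace Amalgam

variable (iA : γ ↪o α) (iB : γ ↪o β)

def Le : α ⊕ β → α ⊕ β → Prop
  | inl a, inl a' => a ≤ a'
  | inl a, inr b => ∀ c, iA c ≤ a → iB c < b
  | inr b, inl a => ∃ c, b ≤ iB c ∧ iA c ≤ a
  | inr b, inr b' => b ≤ b'

variable {iA iB}

theorem not_le_inl_inr {a : α} {b : β} :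
    ¬ Le iA iB (inl a) (inr b) ↔ Le iA iB (inr b) (inl a) := by
  simp [Le, and_comm]

theorem Le.refl : ∀ x, Le iA iB x x
  | inl a => le_refl a
  | inr b => le_refl b

theorem Le.trans : ∀ {x y z}, Le iA iB x y → Le iA iB y z → Le iA iB x z
  | inl _, inl _, inl _, h₁, h₂ => le_trans h₁ h₂
  | inl _, inl _, inr _, h₁, h₂ => fun c hc => h₂ c (hc.trans h₁)
  | inl _, inr _, inl _, h₁, ⟨c, hbc, hca⟩ =>
    le_of_not_gt fun h => (h₁ c (hca.trans h.le)).not_ge hbc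
  | inl _, inr _, inr _, h₁, h₂ => fun c hc => (h₁ c hc).trans_le h₂
  | inr _, inl _, inl _, ⟨c, hbc, hca⟩, h₂ => ⟨c, hbc, hca.trans h₂⟩
  | inr _, inl _, inr _, ⟨_, hbc, hca⟩, h₂ => hbc.trans (h₂ _ hca).le
  | inr _, inr _, inl _, h₁, ⟨c, hbc, hca⟩ => ⟨c, le_trans h₁ hbc, hca⟩
  | inr _, inr _, inr _, h₁, h₂ => le_trans h₁ h₂

theorem Le.antisymm : ∀ {x y}, Le iA iB x y → Le iA iB y x → x = y
  | inl _, inl _, h₁, h₂ => congrArg inl (le_antisymm h₁ h₂)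
  | inl _, inr _, h₁, h₂ => absurd h₁ (not_le_inl_inr.2 h₂)
  | inr _, inl _, h₁, h₂ => absurd h₂ (not_le_inl_inr.2 h₁)
  | inr _, inr _, h₁, h₂ => congrArg inr (le_antisymm h₁ h₂)

theorem Le.total : ∀ x y, Le iA iB x y ∨ Le iA iB y x
  | inl a, inl a' => le_total a a'
  | inl _, inr _ => or_iff_not_imp_left.2 not_le_inl_inr.1
  | inr _, inl _ => or_iff_not_imp_right.2 not_le_inl_inr.1
  | inr b, inr b' => le_total b b'

noncomputable instance : LinearOrder (Amalgam iA iB) where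
  le := Le iA iB
  le_refl := Le.refl
  le_trans _ _ _ := Le.trans
  le_antisymm _ _ := Le.antisymm
  le_total := Le.total
  toDecidableLE := Classical.decRel _

variable (iA iB) in
noncomputable def right : β → α ⊕ β := extend iB (inl ∘ iA) inr

theorem right_iB (c : γ) : right iA iB (iB c) = inl (iA c) :=
  iB.injective.extend_apply _ _ c

theorem right_of_notMem {b : β} (hb : b ∉ range iB) : right iA iB b = inr b :=
  extend_apply' _ _ b hb

theorem le_inl_iA_iff {b : β} {c : γ} : Le iA iB (inr b) (inl (iA c)) ↔ b ≤ iB c :=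
  ⟨fun ⟨_, hb, hc⟩ => hb.trans (iB.le_iff_le.2 (iA.le_iff_le.1 hc)), fun h => ⟨c, h, le_rfl⟩⟩

theorem inl_iA_le_iff {b : β} (hb : b ∉ range iB) {c : γ} :
    Le iA iB (inl (iA c)) (inr b) ↔ iB c ≤ b :=
  ⟨fun h => (h c le_rfl).le, fun h c' hc' =>
    (iB.le_iff_le.2 (iA.le_iff_le.1 hc') |>.trans h).lt_of_ne fun h' => hb ⟨c', h'⟩⟩

theorem right_le_right_iff {b b' : β} : Le iA iB (right iA iB b) (right iA iB b') ↔ b ≤ b' := by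
  by_cases hb : b ∈ range iB <;> by_cases hb' : b' ∈ range iB
  · obtain ⟨c, rfl⟩ := hb
    obtain ⟨c', rfl⟩ := hb'
    rw [right_iB, right_iB, iB.le_iff_le]
    exact iA.le_iff_le
  · obtain ⟨c, rfl⟩ := hb
    rw [right_iB, right_of_notMem hb']
    exact inl_iA_le_iff hb'
  · obtain ⟨c', rfl⟩ := hb'
    rw [right_iB, right_of_notMem hb]
    exact le_inl_iA_iff
  · rw [right_of_notMem hb, right_of_notMem hb']
    rfl

theorem range_inl_inter_range_right : range inl ∩ range (right iA iB) = range (inl ∘ iA) := by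
  ext x
  constructor
  · rintro ⟨⟨a, rfl⟩, b, hb⟩
    by_cases hbC : b ∈ range iB
    · obtain ⟨c, rfl⟩ := hbC
      exact ⟨c, by rw [← hb, right_iB]; rfl⟩
    · rw [right_of_notMem hbC] at hb
      exact absurd hb inr_ne_inl
  · rintro ⟨c, rfl⟩
    exact ⟨⟨iA c, rfl⟩, iB c, right_iB c⟩

section Automorphisms

variable {g : γ ≃o γ} {e : α ≃o α} {e' : β ≃o β}
  (hA : ∀ c, iA (g c) = e (iA c)) (hB : ∀ c, iB (g c) = e' (iB c))

include hA hB in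
theorem map_le_map_iff {x y : α ⊕ β} :
    Le iA iB (Sum.map e e' x) (Sum.map e e' y) ↔ Le iA iB x y := by
  rcases x with a | b <;> rcases y with a' | b'
  · exact e.le_iff_le
  · change (∀ c, iA c ≤ e a → iB c < e' b') ↔ _
    rw [g.surjective.forall]
    simp only [hA, hB, OrderIso.le_iff_le, OrderIso.lt_iff_lt]
    rfl
  · change (∃ c, e' b ≤ iB c ∧ iA c ≤ e a') ↔ _
    rw [g.surjective.exists]
    simp only [hA, hB, OrderIso.le_iff_le]
    rfl
  · exact e'.le_iff_le

include hA hB in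
theorem right_map (b : β) : right iA iB (e' b) = Sum.map e e' (right iA iB b) := by
  by_cases hb : b ∈ range iB
  · obtain ⟨c, rfl⟩ := hb
    rw [← hB, right_iB, right_iB, Sum.map_inl, hA]
  · have hb' : e' b ∉ range iB := by
      rintro ⟨c, hc⟩
      exact hb ⟨g.symm c, e'.injective (by rw [← hB, g.apply_symm_apply, hc])⟩
    rw [right_of_notMem hb, right_of_notMem hb']
    rfl

noncomputable def mapIso : Amalgam iA iB ≃o Amalgam iA iB where
  toEquiv := Equiv.sumCongr e.toEquiv e'.toEquiv
  map_rel_iff' := map_le_map_iff hA hB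

end Automorphisms

variable (iA iB)

noncomputable def leftEmbedding : α ↪o Amalgam iA iB :=
  OrderEmbedding.ofMapLEIff inl fun _ _ => Iff.rfl

noncomputable def rightEmbedding : β ↪o Amalgam iA iB :=
  OrderEmbedding.ofMapLEIff (right iA iB) fun _ _ => right_le_right_iff

end Amalgam

/-- For every set `F`, the class of linearly ordered sets with an `F`-indexed
family of order automorphisms has the strong amalgamation property. -/
theorem linear_orders_automorphisms_strong_amalgamation (F : Type)
    (A B C : LinOrderAuts F)
    (iA : C.carrier ↪o A.carrier) (iB : C.carrier ↪o B.carrier)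
    (hA : ∀ i c, iA (C.f i c) = A.f i (iA c))
    (hB : ∀ i c, iB (C.f i c) = B.f i (iB c)) :
    ∃ (D : LinOrderAuts F) (jA : A.carrier ↪o D.carrier)
      (jB : B.carrier ↪o D.carrier),
      (∀ i a, jA (A.f i a) = D.f i (jA a)) ∧
      (∀ i b, jB (B.f i b) = D.f i (jB b)) ∧
      (∀ c, jA (iA c) = jB (iB c)) ∧
      Set.range jA ∩ Set.range jB = Set.range (fun c => jA (iA c)) :=
  ⟨⟨Amalgam iA iB, fun i => Amalgam.mapIso (hA i) (hB i)⟩,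
    Amalgam.leftEmbedding iA iB, Amalgam.rightEmbedding iA iB,
    fun _ _ => rfl, fun i => Amalgam.right_map (hA i) (hB i),
    fun c => (Amalgam.right_iB c).symm, Amalgam.range_inl_inter_range_right⟩
end

section
/- In the class of linearly ordered sets with one order reversing (antitone) unary operation, a structure C is a strong amalgamation base if and only if the operation g_C has a fixed point (a center). In particular, the class of linearly ordered sets with an order reversing unary operation having a center has the strong amalgamation property: whenever A, B, C are linearly ordered sets with antitone unary operations, g_C has a fixed point, and i_A : C → A, i_B : C → B are order embeddings commuting with the operations, there exist a linearly ordered set D with an antitone unary operation and order embeddings j_A : A → D, j_B : B → D commuting with the operations, with j_A ∘ i_A = j_B ∘ i_B and range(j_A) ∩ range(j_B) = range(j_A ∘ i_A). -/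
/-!
If `g_C` has no centre, adjoin one to `C` in the gap `{c | c < g c}`. In any amalgam of two
copies of this extension over `C` the two new centres coincide, because an antitone map has at
most one fixed point, so the amalgam is not strong.

Conversely, let `c₀` be a centre of `C`. Order the disjoint union `A ⊔ B` by itineraries: the
positions of `x, g x, g² x, …` in the Dedekind completion of `C`, compared lexicographically
with the order reversed at odd steps. If `x` and `y` already differ in position, a point `c` of
`C` separates them, so `g c` separates `g y` from `g x`, and if `g x` and `g y` have the same
position both are the image of `g c`; hence `g` reverses itineraries. Elements with equal
itineraries are ordered inside `A` and inside `B` as there, and across the sides by putting `A`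
first below `c₀` and `B` first above it, which `g` swaps since it fixes `c₀`. The amalgam is
the image of `A ⊔ B` under this ordering, which identifies exactly `i_A c` with `i_B c`.
-/

/-- A linearly ordered set equipped with one order reversing (antitone) unary
operation. -/
structure LinOrderAnti where
  carrier : Type
  [linOrd : LinearOrder carrier]
  g : carrier → carrier
  anti : Antitone g

attribute [instance] LinOrderAnti.linOrd

theorem LowerSet.Iio_lt_iff_mem {α : Type*} [LinearOrder α] {c : α} {L : LowerSet α} :
    LowerSet.Iio c < L ↔ c ∈ L := by
  refine ⟨fun h => ?_, fun hc => lt_of_le_of_ne (fun d hd => L.lower (le_of_lt hd) hc) ?_⟩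
  · obtain ⟨d, hdL, hdc⟩ := Set.exists_of_ssubset (LowerSet.coe_ssubset_coe.2 h)
    exact L.lower (not_lt.1 hdc) hdL
  · rintro rfl
    exact lt_irrefl c hc

theorem Antitone.eq_of_isFixedPt {α : Type*} [LinearOrder α] {f : α → α} (hf : Antitone f)
    {x y : α} (hx : Function.IsFixedPt f x) (hy : Function.IsFixedPt f y) : x = y := by
  wlog hxy : x ≤ y generalizing x y
  · exact (this hy hx (le_of_not_ge hxy)).symm
  exact le_antisymm hxy (by simpa only [hx.eq, hy.eq] using hf hxy)

/-- `toLex (L, False)` is the gap at the cut `L`, and `toLex (Iio c, True)` is the point `c`,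
which comes right after the gap `Iio c`. -/
abbrev Cut (α : Type*) [LinearOrder α] := LowerSet α ×ₗ Prop

namespace Cut

variable {α : Type*} [LinearOrder α]

def point (c : α) : Cut α := toLex (LowerSet.Iio c, True)

def gap (L : LowerSet α) : Cut α := toLex (L, False)

theorem point_strictMono : StrictMono (point : α → Cut α) := fun _ _ hcd =>
  Prod.Lex.toLex_lt_toLex.2 (Or.inl (LowerSet.Iio_lt_iff_mem.2 hcd))

theorem point_ne_gap (c : α) (L : LowerSet α) : point c ≠ gap L := fun h =>
  cast (Prod.ext_iff.1 (toLex.injective h)).2 trivial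

theorem point_le_gap_iff {c : α} {L : LowerSet α} : point c ≤ gap L ↔ c ∈ L := by
  simp [point, gap, Prod.Lex.toLex_le_toLex, LowerSet.Iio_lt_iff_mem]

theorem gap_le_point_iff {c : α} {L : LowerSet α} : gap L ≤ point c ↔ c ∉ L := by
  rw [← not_lt, ← point_le_gap_iff, lt_iff_le_and_ne, and_iff_left (point_ne_gap c L)]

end Cut

namespace OrderEmbedding

open Cut

variable {α β γ : Type*} [LinearOrder α] [LinearOrder β] [LinearOrder γ]
  (i : α ↪o β) (j : α ↪o γ)

def lowerCut (x : β) : LowerSet α :=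
  ⟨{c | i c < x}, fun _ _ hdc hc => (i.monotone hdc).trans_lt hc⟩

def cut (x : β) : Cut α := toLex (i.lowerCut x, x ∈ Set.range i)

@[simp] theorem mem_lowerCut {x : β} {c : α} : c ∈ i.lowerCut x ↔ i c < x := Iff.rfl

theorem lowerCut_apply (c : α) : i.lowerCut (i c) = LowerSet.Iio c :=
  SetLike.ext fun _ => i.lt_iff_lt

@[simp] theorem cut_apply (c : α) : i.cut (i c) = point c := by
  simp [cut, point, lowerCut_apply]

theorem eq_of_cut_eq_point {x : β} {c : α} (h : i.cut x = point c) : x = i c := by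
  obtain ⟨hL, hx⟩ := Prod.ext_iff.1 (toLex.injective h)
  obtain ⟨d, rfl⟩ : x ∈ Set.range i := by simpa using hx
  rw [lowerCut_apply] at hL
  rw [Set.Iio_injective (congrArg SetLike.coe hL)]

theorem cut_eq_point_iff {x : β} {c : α} : i.cut x = point c ↔ x = i c :=
  ⟨i.eq_of_cut_eq_point, fun h => h ▸ i.cut_apply c⟩

theorem cut_mono : Monotone i.cut := by
  intro x y hxy
  have hcut : i.lowerCut x ≤ i.lowerCut y := fun c (hc : i c < x) => hc.trans_le hxy
  refine Prod.Lex.toLex_le_toLex.2 (hcut.lt_or_eq.imp_right fun heq => ⟨heq, ?_⟩)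
  rintro ⟨c, rfl⟩
  change i.lowerCut (i c) = i.lowerCut y at heq
  refine ⟨c, hxy.lt_or_eq.resolve_left fun hlt => ?_⟩
  have : c ∈ i.lowerCut y := hlt
  rw [← heq, mem_lowerCut] at this
  exact lt_irrefl _ this

theorem exists_le_le_of_cut_lt {x : β} {y : γ} (h : i.cut x < j.cut y) :
    ∃ c, x ≤ i c ∧ j c ≤ y := by
  rcases Prod.Lex.toLex_lt_toLex.1 h with hlt | ⟨heq, hxy⟩
  · obtain ⟨c, hcy, hcx⟩ := Set.exists_of_ssubset (LowerSet.coe_ssubset_coe.2 hlt)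
    exact ⟨c, not_lt.1 hcx, le_of_lt hcy⟩
  · obtain ⟨c, rfl⟩ : y ∈ Set.range j := (Classical.not_imp.1 hxy.not_ge).1
    change i.lowerCut x = j.lowerCut (j c) at heq
    refine ⟨c, not_lt.1 fun hcx => ?_, le_rfl⟩
    have : c ∈ i.lowerCut x := hcx
    rw [heq, mem_lowerCut] at this
    exact lt_irrefl _ this

end OrderEmbedding

namespace LinOrderAnti

open Cut

variable (C : LinOrderAnti)

def centerCut : LowerSet C.carrier :=
  ⟨{c | c < C.g c}, fun _ _ hdc hc => hdc.trans_lt (hc.trans_le (C.anti hdc))⟩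

def withCenterCut : Option C.carrier → Cut C.carrier
  | some c => point c
  | none => gap C.centerCut

theorem withCenterCut_injective : Function.Injective C.withCenterCut := by
  rintro (_ | c) (_ | d) h
  · rfl
  · exact absurd h.symm (point_ne_gap _ _)
  · exact absurd h (point_ne_gap _ _)
  · exact congrArg some (point_strictMono.injective h)

noncomputable def withCenter (hC : ∀ c, C.g c ≠ c) : LinOrderAnti where
  carrier := Option C.carrier
  linOrd := LinearOrder.lift' C.withCenterCut C.withCenterCut_injective
  g := Option.map C.g
  anti := by
    intro x y hxy
    change C.withCenterCut _ ≤ C.withCenterCut _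
    change C.withCenterCut _ ≤ C.withCenterCut _ at hxy
    rcases x with _ | c <;> rcases y with _ | d
    · exact le_rfl
    · refine point_le_gap_iff.2 (lt_of_le_of_ne ?_ (hC _).symm)
      exact C.anti (not_lt.1 (gap_le_point_iff.1 hxy))
    · exact gap_le_point_iff.2 (not_lt.2 (C.anti (point_le_gap_iff.1 hxy).le))
    · exact point_strictMono.monotone (C.anti (point_strictMono.le_iff_le.1 hxy))

noncomputable def toWithCenter (hC : ∀ c, C.g c ≠ c) : C.carrier ↪o (C.withCenter hC).carrier :=
  OrderEmbedding.ofStrictMono some fun c d h =>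
    (point_strictMono h : C.withCenterCut (some c) < C.withCenterCut (some d))

def IsStrongAmalgamationBase (C : LinOrderAnti) : Prop :=
  ∀ (A B : LinOrderAnti) (iA : C.carrier ↪o A.carrier) (iB : C.carrier ↪o B.carrier),
    (∀ c, iA (C.g c) = A.g (iA c)) →
    (∀ c, iB (C.g c) = B.g (iB c)) →
    ∃ (D : LinOrderAnti) (jA : A.carrier ↪o D.carrier) (jB : B.carrier ↪o D.carrier),
      (∀ a, jA (A.g a) = D.g (jA a)) ∧
      (∀ b, jB (B.g b) = D.g (jB b)) ∧
      (∀ c, jA (iA c) = jB (iB c)) ∧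
      Set.range jA ∩ Set.range jB = Set.range (fun c => jA (iA c))

theorem IsStrongAmalgamationBase.exists_isFixedPt {C : LinOrderAnti}
    (hC : C.IsStrongAmalgamationBase) : ∃ c, C.g c = c := by
  by_contra! hno
  obtain ⟨D, jA, jB, hjA, hjB, -, hrange⟩ :=
    hC _ _ (C.toWithCenter hno) (C.toWithCenter hno) (fun _ => rfl) (fun _ => rfl)
  have hcenter : jA none = jB none := D.anti.eq_of_isFixedPt (hjA none).symm (hjB none).symm
  obtain ⟨c, hc⟩ : jA none ∈ Set.range fun c => jA (C.toWithCenter hno c) :=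
    hrange ▸ ⟨⟨none, rfl⟩, none, hcenter.symm⟩
  exact Option.some_ne_none c (jA.injective hc)

end LinOrderAnti

namespace Itinerary

open Function OrderDual

variable {P α : Type*}

def alt (n : ℕ) (p : P) : P ⊕ₗ Pᵒᵈ :=
  if Even n then toLex (.inl p) else toLex (.inr (toDual p))

theorem alt_injective (n : ℕ) : Injective (alt (P := P) n) := by
  intro p q h
  by_cases hn : Even n <;> simpa [alt, hn] using h

def itinerary (φ : α → P) (f : α → α) (x : α) : Lex (ℕ → P ⊕ₗ Pᵒᵈ) :=
  toLex fun n => alt n (φ (f^[n] x))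

theorem itinerary_semiconj {β : Type*} {ψ : β → P} {f : α → α} {g : β → β} {e : α → β}
    (he : Semiconj e f g) (x : α) : itinerary ψ g (e x) = itinerary (ψ ∘ e) f x := by
  simp only [itinerary, comp_apply, he.iterate_right _ x]

variable {φ : α → P} {f : α → α}

theorem itinerary_eq_iff {x y : α} :
    itinerary φ f x = itinerary φ f y ↔ ∀ n, φ (f^[n] x) = φ (f^[n] y) := by
  simp only [itinerary, toLex_inj, funext_iff, (alt_injective _).eq_iff]

variable [LinearOrder P]

theorem alt_zero_lt_alt_zero {p q : P} : alt 0 p < alt 0 q ↔ p < q := by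
  simp [alt]

theorem alt_succ_lt_alt_succ {n : ℕ} {p q : P} :
    alt (n + 1) p < alt (n + 1) q ↔ alt n q < alt n p := by
  by_cases h : Even n <;> simp [alt, h, Nat.even_add_one]

theorem alt_succ_le_alt_succ {n : ℕ} {p q : P} :
    alt (n + 1) p ≤ alt (n + 1) q ↔ alt n q ≤ alt n p := by
  simp only [← not_lt, alt_succ_lt_alt_succ]

theorem itinerary_lt_iff {x y : α} :
    itinerary φ f x < itinerary φ f y ↔
      φ x < φ y ∨ φ x = φ y ∧ itinerary φ f (f y) < itinerary φ f (f x) := by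
  change Pi.Lex (· < ·) (· < ·) (fun n => alt n (φ (f^[n] x))) (fun n => alt n (φ (f^[n] y))) ↔
    _ ∨ _ ∧ Pi.Lex (· < ·) (· < ·) (fun n => alt n (φ (f^[n] (f y))))
      (fun n => alt n (φ (f^[n] (f x))))
  simp only [← iterate_succ_apply]
  constructor
  · rintro ⟨_ | k, hbefore, hk⟩
    · exact Or.inl (alt_zero_lt_alt_zero.1 hk)
    · refine Or.inr ⟨alt_injective 0 (hbefore 0 k.succ_pos), k, fun j hj => ?_,
        alt_succ_lt_alt_succ.1 hk⟩
      exact congrArg _ (alt_injective _ (hbefore (j + 1) (Nat.succ_lt_succ hj))).symm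
  · rintro (h | ⟨h0, k, hbefore, hk⟩)
    · exact ⟨0, fun _ h => absurd h (Nat.not_lt_zero _), alt_zero_lt_alt_zero.2 h⟩
    refine ⟨k + 1, fun j hj => ?_, alt_succ_lt_alt_succ.2 hk⟩
    rcases j with _ | j
    · exact congrArg _ h0
    · exact congrArg _ (alt_injective _ (hbefore j (Nat.lt_of_succ_lt_succ hj))).symm

theorem itinerary_monotone [Preorder α] (hφ : Monotone φ) (hf : Antitone f) :
    Monotone (itinerary φ f) := by
  suffices h : ∀ n x y, x ≤ y → alt n (φ (f^[n] x)) ≤ alt n (φ (f^[n] y)) from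
    fun x y hxy => Pi.toLex_monotone fun n => h n x y hxy
  intro n
  induction n with
  | zero => exact fun x y hxy => by simpa [alt] using hφ hxy
  | succ n ih =>
    intro x y hxy
    rw [iterate_succ_apply, iterate_succ_apply, alt_succ_le_alt_succ]
    exact ih _ _ (hf hxy)

end Itinerary

namespace LinOrderAnti

open Cut Itinerary Function

theorem exists_point_between_cut_g_of_cut_lt {C A B : LinOrderAnti}
    (i : C.carrier ↪o A.carrier) (j : C.carrier ↪o B.carrier)
    (hi : ∀ c, i (C.g c) = A.g (i c)) (hj : ∀ c, j (C.g c) = B.g (j c))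
    {x : A.carrier} {y : B.carrier} (h : i.cut x < j.cut y) :
    ∃ c, j.cut (B.g y) ≤ point c ∧ point c ≤ i.cut (A.g x) := by
  obtain ⟨c, hxc, hcy⟩ := i.exists_le_le_of_cut_lt j h
  refine ⟨C.g c, ?_, ?_⟩
  · rw [← j.cut_apply, hj]
    exact j.cut_mono (B.anti hcy)
  · rw [← i.cut_apply, hi]
    exact i.cut_mono (A.anti hxc)

structure Span (C : LinOrderAnti) where
  A : LinOrderAnti
  B : LinOrderAnti
  iA : C.carrier ↪o A.carrier
  iB : C.carrier ↪o B.carrier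
  map_gA : ∀ c, iA (C.g c) = A.g (iA c)
  map_gB : ∀ c, iB (C.g c) = B.g (iB c)

namespace Span

variable {C : LinOrderAnti} (T : C.Span)

abbrev Union : Type := T.A.carrier ⊕ T.B.carrier

def g : T.Union → T.Union := Sum.map T.A.g T.B.g

def cut : T.Union → Cut C.carrier := Sum.elim T.iA.cut T.iB.cut

def IsPoint (s : T.Union) : Prop := ∃ c, T.cut s = point c

variable {T}

theorem cut_eq_point_iff {s : T.Union} {c : C.carrier} :
    T.cut s = point c ↔ s = .inl (T.iA c) ∨ s = .inr (T.iB c) := by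
  rcases s with a | b <;> simp [cut, OrderEmbedding.cut_eq_point_iff]

theorem isPoint_congr {s t : T.Union} (h : T.cut s = T.cut t) : T.IsPoint s ↔ T.IsPoint t := by
  simp only [IsPoint, h]

theorem isPoint_g {s : T.Union} (hs : T.IsPoint s) : T.IsPoint (T.g s) := by
  obtain ⟨c, hc⟩ := hs
  refine ⟨C.g c, ?_⟩
  rcases cut_eq_point_iff.1 hc with rfl | rfl
  · simp [g, cut, ← T.map_gA]
  · simp [g, cut, ← T.map_gB]

theorem exists_point_between_cut_g {s t : T.Union} (h : T.cut s < T.cut t) :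
    ∃ c, T.cut (T.g t) ≤ point c ∧ point c ≤ T.cut (T.g s) := by
  rcases s with a | b <;> rcases t with a' | b'
  · exact exists_point_between_cut_g_of_cut_lt _ _ T.map_gA T.map_gA h
  · exact exists_point_between_cut_g_of_cut_lt _ _ T.map_gA T.map_gB h
  · exact exists_point_between_cut_g_of_cut_lt _ _ T.map_gB T.map_gA h
  · exact exists_point_between_cut_g_of_cut_lt _ _ T.map_gB T.map_gB h

variable (T)

theorem semiconj_inl : Semiconj .inl T.A.g T.g := fun _ => rfl

theorem semiconj_inr : Semiconj .inr T.B.g T.g := fun _ => rfl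

theorem semiconj_inl_iA : Semiconj (.inl ∘ T.iA) C.g T.g := fun c => congrArg _ (T.map_gA c)

theorem semiconj_inr_iB : Semiconj (.inr ∘ T.iB) C.g T.g := fun c => congrArg _ (T.map_gB c)

theorem itinerary_inl_iA (c : C.carrier) :
    itinerary T.cut T.g (.inl (T.iA c)) = itinerary point C.g c :=
  (itinerary_semiconj T.semiconj_inl_iA c).trans <|
    congrArg (itinerary · C.g c) (funext fun _ => by simp [cut])

theorem itinerary_inr_iB (c : C.carrier) :
    itinerary T.cut T.g (.inr (T.iB c)) = itinerary point C.g c :=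
  (itinerary_semiconj T.semiconj_inr_iB c).trans <|
    congrArg (itinerary · C.g c) (funext fun _ => by simp [cut])

section Amalgam

variable (c₀ : C.carrier)

def keyA (a : T.A.carrier) : T.A.carrier ⊕ₗ (T.B.carrier ⊕ₗ T.A.carrier) :=
  if a < T.iA c₀ then toLex (.inl a) else toLex (.inr (toLex (.inr a)))

def keyB (b : T.B.carrier) : T.A.carrier ⊕ₗ (T.B.carrier ⊕ₗ T.A.carrier) :=
  toLex (.inr (toLex (.inl b)))

def tieKey : T.Union → T.A.carrier ⊕ₗ (T.B.carrier ⊕ₗ T.A.carrier) :=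
  Sum.elim (T.keyA c₀) T.keyB

open Classical in
/-- Points of `C` get the least key, so that `inl (iA c)` and `inr (iB c)` get the same rank. -/
noncomputable def key (s : T.Union) : WithBot (T.A.carrier ⊕ₗ (T.B.carrier ⊕ₗ T.A.carrier)) :=
  if T.IsPoint s then ⊥ else ↑(T.tieKey c₀ s)

noncomputable def rank (s : T.Union) :
    Lex (ℕ → Cut C.carrier ⊕ₗ (Cut C.carrier)ᵒᵈ) ×ₗ
      WithBot (T.A.carrier ⊕ₗ (T.B.carrier ⊕ₗ T.A.carrier)) :=
  toLex (itinerary T.cut T.g s, T.key c₀ s)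

variable {T c₀}

theorem keyA_strictMono : StrictMono (T.keyA c₀) := by
  intro a a' h
  unfold keyA
  split_ifs with h₁ h₂ h₂
  · exact Sum.Lex.inl_lt_inl_iff.2 h
  · exact Sum.Lex.inl_lt_inr _ _
  · exact absurd (h.trans h₂) h₁
  · exact Sum.Lex.inr_lt_inr_iff.2 (Sum.Lex.inr_lt_inr_iff.2 h)

theorem keyB_strictMono : StrictMono T.keyB := fun _ _ h =>
  Sum.Lex.inr_lt_inr_iff.2 (Sum.Lex.inl_lt_inl_iff.2 h)

theorem keyA_le_keyB_iff {a : T.A.carrier} {b : T.B.carrier} :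
    T.keyA c₀ a ≤ T.keyB b ↔ a < T.iA c₀ := by
  unfold keyA keyB
  split_ifs with h <;> simp [h]

theorem keyA_ne_keyB (a : T.A.carrier) (b : T.B.carrier) : T.keyA c₀ a ≠ T.keyB b := by
  unfold keyA keyB
  split_ifs <;> simp

theorem keyB_le_keyA_iff {a : T.A.carrier} {b : T.B.carrier} :
    T.keyB b ≤ T.keyA c₀ a ↔ T.iA c₀ ≤ a := by
  rw [← not_lt, ← not_lt, not_iff_not, ← keyA_le_keyB_iff, le_iff_lt_or_eq,
    or_iff_left (keyA_ne_keyB a b)]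

theorem tieKey_g_le (hc₀ : C.g c₀ = c₀) {s t : T.Union} (ht : ¬T.IsPoint t)
    (hgt : ¬T.IsPoint (T.g t)) (h : T.tieKey c₀ s ≤ T.tieKey c₀ t) :
    T.tieKey c₀ (T.g t) ≤ T.tieKey c₀ (T.g s) := by
  have hfix : T.A.g (T.iA c₀) = T.iA c₀ := by rw [← T.map_gA, hc₀]
  rcases s with a | b <;> rcases t with a' | b'
  · exact keyA_strictMono.monotone (T.A.anti (keyA_strictMono.le_iff_le.1 h))
  · exact keyB_le_keyA_iff.2 (hfix ▸ T.A.anti (keyA_le_keyB_iff.1 h).le)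
  · have ha' : T.iA c₀ < a' :=
      (keyB_le_keyA_iff.1 h).lt_of_ne fun h' => ht ⟨c₀, by simp [cut, ← h']⟩
    refine keyA_le_keyB_iff.2 ((hfix ▸ T.A.anti ha'.le).lt_of_ne fun h' => hgt ⟨c₀, ?_⟩)
    simp [g, cut, h']
  · exact keyB_strictMono.monotone (T.B.anti (keyB_strictMono.le_iff_le.1 h))

theorem key_of_isPoint {s : T.Union} (h : T.IsPoint s) : T.key c₀ s = ⊥ := if_pos h

theorem key_of_not_isPoint {s : T.Union} (h : ¬T.IsPoint s) : T.key c₀ s = T.tieKey c₀ s :=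
  if_neg h

theorem rank_inr_iB (c : C.carrier) : T.rank c₀ (.inr (T.iB c)) = T.rank c₀ (.inl (T.iA c)) := by
  rw [rank, rank, itinerary_inl_iA, itinerary_inr_iB, key_of_isPoint ⟨c, by simp [cut]⟩,
    key_of_isPoint ⟨c, by simp [cut]⟩]

theorem rank_eq_of_cut_eq_point {s : T.Union} {c : C.carrier} (h : T.cut s = point c) :
    T.rank c₀ s = T.rank c₀ (.inl (T.iA c)) := by
  rcases cut_eq_point_iff.1 h with rfl | rfl
  · rfl
  · exact rank_inr_iB c

theorem rank_g_le (hc₀ : C.g c₀ = c₀) {s t : T.Union} (h : T.rank c₀ s ≤ T.rank c₀ t) :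
    T.rank c₀ (T.g t) ≤ T.rank c₀ (T.g s) := by
  rcases Prod.Lex.toLex_le_toLex.1 h with hlt | ⟨hitin, hkey⟩
  · rcases itinerary_lt_iff.1 hlt with hcut | ⟨-, hlt'⟩
    · obtain ⟨c, htc, hcs⟩ := exists_point_between_cut_g hcut
      rcases (htc.trans hcs).lt_or_eq with hlt'' | heq
      · exact (Prod.Lex.toLex_lt_toLex.2 (Or.inl (itinerary_lt_iff.2 (Or.inl hlt'')))).le
      · have hs : T.cut (T.g s) = point c := le_antisymm (heq ▸ htc) hcs
        rw [rank_eq_of_cut_eq_point hs, rank_eq_of_cut_eq_point (heq.trans hs)]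
    · exact (Prod.Lex.toLex_lt_toLex.2 (Or.inl hlt')).le
  · have hcut : ∀ n, T.cut (T.g^[n] s) = T.cut (T.g^[n] t) := itinerary_eq_iff.1 hitin
    have hitin' : itinerary T.cut T.g (T.g t) = itinerary T.cut T.g (T.g s) :=
      itinerary_eq_iff.2 fun n => by simpa only [← iterate_succ_apply] using (hcut (n + 1)).symm
    refine Prod.Lex.toLex_le_toLex.2 (Or.inr ⟨hitin', ?_⟩)
    have hg : T.IsPoint (T.g s) ↔ T.IsPoint (T.g t) := isPoint_congr (hcut 1)
    by_cases hgs : T.IsPoint (T.g s)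
    · rw [key_of_isPoint (c₀ := c₀) (hg.1 hgs)]
      exact bot_le
    have hgt : ¬T.IsPoint (T.g t) := hg.not.1 hgs
    have ht : ¬T.IsPoint t := mt isPoint_g hgt
    have hs : ¬T.IsPoint s := (isPoint_congr (hcut 0)).not.2 ht
    change T.key c₀ s ≤ T.key c₀ t at hkey
    rw [key_of_not_isPoint hs, key_of_not_isPoint ht] at hkey
    rw [key_of_not_isPoint hgs, key_of_not_isPoint hgt]
    exact WithBot.coe_le_coe.2 (tieKey_g_le hc₀ ht hgt (WithBot.coe_le_coe.1 hkey))

theorem rank_g_congr (hc₀ : C.g c₀ = c₀) {s t : T.Union} (h : T.rank c₀ s = T.rank c₀ t) :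
    T.rank c₀ (T.g s) = T.rank c₀ (T.g t) :=
  le_antisymm (rank_g_le hc₀ h.ge) (rank_g_le hc₀ h.le)

theorem rank_lt_rank {s t : T.Union} (hitin : itinerary T.cut T.g s ≤ itinerary T.cut T.g t)
    (hpoint : T.IsPoint s → T.cut s ≠ T.cut t) (hkey : T.tieKey c₀ s < T.tieKey c₀ t) :
    T.rank c₀ s < T.rank c₀ t := by
  refine Prod.Lex.toLex_lt_toLex.2 (hitin.lt_or_eq.imp id fun heq => ⟨heq, ?_⟩)
  have hcut : T.cut s = T.cut t := itinerary_eq_iff.1 heq 0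
  have hs : ¬T.IsPoint s := fun h => hpoint h hcut
  change T.key c₀ s < T.key c₀ t
  rw [key_of_not_isPoint hs, key_of_not_isPoint ((isPoint_congr hcut).not.1 hs)]
  exact WithBot.coe_lt_coe.2 hkey

theorem rank_inl_strictMono : StrictMono fun a => T.rank c₀ (.inl a) := by
  intro a a' h
  refine rank_lt_rank ?_ ?_ (keyA_strictMono h)
  · rw [itinerary_semiconj T.semiconj_inl, itinerary_semiconj T.semiconj_inl]
    exact itinerary_monotone T.iA.cut_mono T.A.anti h.le
  · rintro ⟨c, hc⟩ hcut
    exact h.ne ((T.iA.eq_of_cut_eq_point hc).trans (T.iA.eq_of_cut_eq_point (hcut.symm.trans hc)).symm)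

theorem rank_inr_strictMono : StrictMono fun b => T.rank c₀ (.inr b) := by
  intro b b' h
  refine rank_lt_rank ?_ ?_ (keyB_strictMono h)
  · rw [itinerary_semiconj T.semiconj_inr, itinerary_semiconj T.semiconj_inr]
    exact itinerary_monotone T.iB.cut_mono T.B.anti h.le
  · rintro ⟨c, hc⟩ hcut
    exact h.ne ((T.iB.eq_of_cut_eq_point hc).trans (T.iB.eq_of_cut_eq_point (hcut.symm.trans hc)).symm)

theorem mem_range_iA_of_rank_eq {a : T.A.carrier} {b : T.B.carrier}
    (h : T.rank c₀ (.inl a) = T.rank c₀ (.inr b)) : a ∈ Set.range T.iA := by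
  by_contra hna
  have ha : ¬T.IsPoint (.inl a) := fun ⟨c, hc⟩ => hna ⟨c, (T.iA.eq_of_cut_eq_point hc).symm⟩
  have hkey : T.key c₀ (.inl a) = T.key c₀ (.inr b) := congrArg (fun r => (ofLex r).2) h
  rw [key_of_not_isPoint ha] at hkey
  by_cases hb : T.IsPoint (.inr b)
  · rw [key_of_isPoint hb] at hkey
    exact WithBot.coe_ne_bot hkey
  · rw [key_of_not_isPoint hb] at hkey
    exact keyA_ne_keyB a b (WithBot.coe_injective hkey)

variable (T c₀)

noncomputable def amalgam (hc₀ : C.g c₀ = c₀) : LinOrderAnti where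
  carrier := Set.range (T.rank c₀)
  g y := ⟨T.rank c₀ (T.g y.2.choose), _, rfl⟩
  anti y z h := rank_g_le (s := y.2.choose) (t := z.2.choose) hc₀ <| by
    rw [y.2.choose_spec, z.2.choose_spec]
    exact h

variable (hc₀ : C.g c₀ = c₀)

theorem amalgam_g_mk (s : T.Union) :
    (T.amalgam c₀ hc₀).g ⟨T.rank c₀ s, s, rfl⟩ = ⟨T.rank c₀ (T.g s), T.g s, rfl⟩ :=
  Subtype.ext (rank_g_congr hc₀ (Exists.choose_spec (⟨s, rfl⟩ : T.rank c₀ s ∈ Set.range _)))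

noncomputable def inlEmb : T.A.carrier ↪o (T.amalgam c₀ hc₀).carrier :=
  OrderEmbedding.ofStrictMono (fun a => ⟨T.rank c₀ (.inl a), _, rfl⟩) fun _ _ h =>
    rank_inl_strictMono h

noncomputable def inrEmb : T.B.carrier ↪o (T.amalgam c₀ hc₀).carrier :=
  OrderEmbedding.ofStrictMono (fun b => ⟨T.rank c₀ (.inr b), _, rfl⟩) fun _ _ h =>
    rank_inr_strictMono h

theorem inrEmb_iB (c : C.carrier) : T.inrEmb c₀ hc₀ (T.iB c) = T.inlEmb c₀ hc₀ (T.iA c) :=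
  Subtype.ext (rank_inr_iB c)

theorem range_inlEmb_inter_range_inrEmb :
    Set.range (T.inlEmb c₀ hc₀) ∩ Set.range (T.inrEmb c₀ hc₀) =
      Set.range fun c => T.inlEmb c₀ hc₀ (T.iA c) := by
  refine subset_antisymm ?_ ?_
  · rintro _ ⟨⟨a, rfl⟩, b, hb⟩
    obtain ⟨c, rfl⟩ := mem_range_iA_of_rank_eq (congrArg Subtype.val hb).symm
    exact ⟨c, rfl⟩
  · rintro _ ⟨c, rfl⟩
    exact ⟨⟨_, rfl⟩, _, T.inrEmb_iB c₀ hc₀ c⟩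

end Amalgam

end Span

theorem isStrongAmalgamationBase_of_isFixedPt {C : LinOrderAnti} {c₀ : C.carrier}
    (hc₀ : C.g c₀ = c₀) : C.IsStrongAmalgamationBase := by
  intro A B iA iB hA hB
  let T : C.Span := ⟨A, B, iA, iB, hA, hB⟩
  exact ⟨T.amalgam c₀ hc₀, T.inlEmb c₀ hc₀, T.inrEmb c₀ hc₀,
    fun a => (T.amalgam_g_mk c₀ hc₀ (.inl a)).symm, fun b => (T.amalgam_g_mk c₀ hc₀ (.inr b)).symm,
    fun c => (T.inrEmb_iB c₀ hc₀ c).symm, T.range_inlEmb_inter_range_inrEmb c₀ hc₀⟩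

end LinOrderAnti

/-- In the class of linearly ordered sets with one order reversing unary
operation, a structure `C` is a strong amalgamation base if and only if its
operation has a fixed point (a center). -/
theorem antitone_strong_amalgamation_base_iff_center (C : LinOrderAnti) :
    (∀ (A B : LinOrderAnti)
      (iA : C.carrier ↪o A.carrier) (iB : C.carrier ↪o B.carrier),
      (∀ c, iA (C.g c) = A.g (iA c)) →
      (∀ c, iB (C.g c) = B.g (iB c)) →
      ∃ (D : LinOrderAnti) (jA : A.carrier ↪o D.carrier)
        (jB : B.carrier ↪o D.carrier),
        (∀ a, jA (A.g a) = D.g (jA a)) ∧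
        (∀ b, jB (B.g b) = D.g (jB b)) ∧
        (∀ c, jA (iA c) = jB (iB c)) ∧
        Set.range jA ∩ Set.range jB = Set.range (fun c => jA (iA c)))
    ↔ ∃ c, C.g c = c :=
  ⟨LinOrderAnti.IsStrongAmalgamationBase.exists_isFixedPt, fun ⟨_, hc₀⟩ =>
    LinOrderAnti.isStrongAmalgamationBase_of_isFixedPt hc₀⟩
end
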